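/- In the restricted class-segregated buffer model with one queue per value v_1 < ... < v_m, all of capacity B, for every input sequence σ: every feasible diligent schedule accepts at most as many v_m-packets as GREEDY does (A*_m ≤ A_m), and moreover there exists a feasible diligent schedule of maximum benefit that accepts exactly A_m many v_m-packets (A*_m = A_m). -/
import Mathlib


/-!
Model of class-segregated buffer management (Al-Bawani, Souza).

A switch has `n` queues and `m` packet values `val : Fin m → ℝ`; queue `q` is
assigned value index `qval q` and has capacity `cap q`.  An input sequence is a
list of events: an `arrive q` event (a packet destined to queue `q`) or a
`send` event.  A (diligent) schedule is given by its decisions at send events,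
`dec : ℕ → Option (Fin n)` (decision for the `k`-th send event): acceptance is
forced (accept iff the destination queue is not full), at a send event the
schedule transmits one packet from the chosen non-empty queue, and it may
choose `none` only if all queues are empty.  `run` simulates the schedule,
tracking queue contents, the number of accepted packets of each value, and the
number of transmitted packets of each value.  `Feasible` expresses diligence,
and `GreedyFeasible` additionally requires that every transmitted packet has
the highest value among non-empty queues (ties broken arbitrarily).
`benefit` is the total value of transmitted packets.
-/

namespace BufferModel

inductive BEvent (n : ℕ) : Type where
  | arrive (q : Fin n) : BEvent n
  | send : BEvent n
deriving DecidableEq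

/-- `queue q` = number of packets currently in queue `q`; `acc i` = number of
packets of value index `i` accepted so far; `trans i` = number of packets of
value index `i` transmitted so far. -/
structure BState (n m : ℕ) where
  queue : Fin n → ℕ
  acc : Fin m → ℕ
  trans : Fin m → ℕ

def initState (n m : ℕ) : BState n m :=
  ⟨fun _ => 0, fun _ => 0, fun _ => 0⟩

/-- Diligent processing of an arrive event at queue `q`: accept iff there is room. -/
def arriveStep {n m : ℕ} (cap : Fin n → ℕ) (qval : Fin n → Fin m)
    (s : BState n m) (q : Fin n) : BState n m :=
  if s.queue q < cap q then
    { queue := Function.update s.queue q (s.queue q + 1)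
      acc := Function.update s.acc (qval q) (s.acc (qval q) + 1)
      trans := s.trans }
  else s

/-- Processing of a send event with decision `d`. -/
def sendStep {n m : ℕ} (qval : Fin n → Fin m) (s : BState n m)
    (d : Option (Fin n)) : BState n m :=
  match d with
  | some q =>
      if 0 < s.queue q then
        { queue := Function.update s.queue q (s.queue q - 1)
          acc := s.acc
          trans := Function.update s.trans (qval q) (s.trans (qval q) + 1) }
      else s
  | none => s

/-- Simulate the schedule with send-decisions `dec` on an event list, starting
with send-counter `k` and state `s`. -/
def run {n m : ℕ} (cap : Fin n → ℕ) (qval : Fin n → Fin m)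
    (dec : ℕ → Option (Fin n)) :
    List (BEvent n) → ℕ → BState n m → BState n m
  | [], _, s => s
  | BEvent.arrive q :: es, k, s => run cap qval dec es k (arriveStep cap qval s q)
  | BEvent.send :: es, k, s => run cap qval dec es (k + 1) (sendStep qval s (dec k))

/-- The schedule `dec` is feasible (diligent): at each send event it transmits
from a non-empty queue, and it stays idle only if all queues are empty. -/
def Feasible {n m : ℕ} (cap : Fin n → ℕ) (qval : Fin n → Fin m)
    (dec : ℕ → Option (Fin n)) :
    List (BEvent n) → ℕ → BState n m → Prop
  | [], _, _ => True
  | BEvent.arrive q :: es, k, s => Feasible cap qval dec es k (arriveStep cap qval s q)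
  | BEvent.send :: es, k, s =>
      (match dec k with
       | some q => 0 < s.queue q
       | none => ∀ q, s.queue q = 0) ∧
      Feasible cap qval dec es (k + 1) (sendStep qval s (dec k))

/-- The schedule `dec` is a GREEDY schedule: feasible, and at every send event
it transmits a packet from a non-empty queue of the highest value. -/
def GreedyFeasible {n m : ℕ} (val : Fin m → ℝ) (cap : Fin n → ℕ)
    (qval : Fin n → Fin m) (dec : ℕ → Option (Fin n)) :
    List (BEvent n) → ℕ → BState n m → Prop
  | [], _, _ => True
  | BEvent.arrive q :: es, k, s =>
      GreedyFeasible val cap qval dec es k (arriveStep cap qval s q)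
  | BEvent.send :: es, k, s =>
      (match dec k with
       | some q => 0 < s.queue q ∧
           ∀ q', 0 < s.queue q' → val (qval q') ≤ val (qval q)
       | none => ∀ q, s.queue q = 0) ∧
      GreedyFeasible val cap qval dec es (k + 1) (sendStep qval s (dec k))

/-- Benefit of a schedule: total value of the transmitted packets. -/
def benefit {n m : ℕ} (val : Fin m → ℝ) (s : BState n m) : ℝ :=
  ∑ i, val i * (s.trans i : ℝ)

end BufferModel

namespace BufferModel

section Aux

variable {m : ℕ} (B : ℕ)

/-- number of send events -/
def nsends {n : ℕ} : List (BEvent n) → ℕ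
  | [] => 0
  | BEvent.arrive _ :: es => nsends es
  | BEvent.send :: es => nsends es + 1

lemma arriveStep_queue (s : BState m m) (q r : Fin m) :
    (arriveStep (fun _ => B) id s q).queue r =
      if s.queue q < B ∧ r = q then s.queue r + 1 else s.queue r := by
  unfold arriveStep
  by_cases h : s.queue q < B <;> by_cases hr : r = q <;>
    simp [h, hr, Function.update_apply]

lemma arriveStep_acc (s : BState m m) (q r : Fin m) :
    (arriveStep (fun _ => B) id s q).acc r =
      if s.queue q < B ∧ r = q then s.acc r + 1 else s.acc r := by
  unfold arriveStep
  by_cases h : s.queue q < B <;> by_cases hr : r = q <;>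
    simp [h, hr, Function.update_apply]

lemma arriveStep_trans (s : BState m m) (q r : Fin m) :
    (arriveStep (fun _ => B) id s q).trans r = s.trans r := by
  unfold arriveStep
  by_cases h : s.queue q < B <;> simp [h]

lemma sendStep_some_queue (s : BState m m) (q r : Fin m) :
    (sendStep id s (some q)).queue r =
      if 0 < s.queue q ∧ r = q then s.queue r - 1 else s.queue r := by
  unfold sendStep
  by_cases h : 0 < s.queue q <;> by_cases hr : r = q <;>
    simp [h, hr, Function.update_apply]

lemma sendStep_some_acc (s : BState m m) (q r : Fin m) :
    (sendStep id s (some q)).acc r = s.acc r := by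
  unfold sendStep
  by_cases h : 0 < s.queue q <;> simp [h]

lemma sendStep_some_trans (s : BState m m) (q r : Fin m) :
    (sendStep id s (some q)).trans r =
      if 0 < s.queue q ∧ r = q then s.trans r + 1 else s.trans r := by
  unfold sendStep
  by_cases h : 0 < s.queue q <;> by_cases hr : r = q <;>
    simp [h, hr, Function.update_apply]

lemma sendStep_none (s : BState m m) : sendStep (id : Fin m → Fin m) s none = s := rfl

end Aux
section Aux1b

variable {m B : ℕ}

lemma arriveStep_queue_self (s : BState m m) (q : Fin m) :
    (arriveStep (fun _ => B) id s q).queue q =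
      if s.queue q < B then s.queue q + 1 else s.queue q := by
  rw [arriveStep_queue]; split_ifs with h1 h2 <;> first | rfl | omega | (exact absurd ⟨h2, rfl⟩ h1)

lemma arriveStep_queue_ne {r q : Fin m} (s : BState m m) (h : r ≠ q) :
    (arriveStep (fun _ => B) id s q).queue r = s.queue r := by
  rw [arriveStep_queue]; simp [h]

lemma arriveStep_acc_self (s : BState m m) (q : Fin m) :
    (arriveStep (fun _ => B) id s q).acc q =
      if s.queue q < B then s.acc q + 1 else s.acc q := by
  rw [arriveStep_acc]; split_ifs with h1 h2 <;> first | rfl | omega | (exact absurd ⟨h2, rfl⟩ h1)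

lemma arriveStep_acc_ne {r q : Fin m} (s : BState m m) (h : r ≠ q) :
    (arriveStep (fun _ => B) id s q).acc r = s.acc r := by
  rw [arriveStep_acc]; simp [h]

lemma sendStep_queue_self (s : BState m m) (q : Fin m) :
    (sendStep id s (some q)).queue q =
      if 0 < s.queue q then s.queue q - 1 else s.queue q := by
  rw [sendStep_some_queue]; split_ifs with h1 h2 <;> first | rfl | omega | (exact absurd ⟨h2, rfl⟩ h1)

lemma sendStep_queue_ne {r q : Fin m} (s : BState m m) (h : r ≠ q) :
    (sendStep id s (some q)).queue r = s.queue r := by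
  rw [sendStep_some_queue]; simp [h]

lemma sendStep_trans_self (s : BState m m) (q : Fin m) :
    (sendStep id s (some q)).trans q =
      if 0 < s.queue q then s.trans q + 1 else s.trans q := by
  rw [sendStep_some_trans]; split_ifs with h1 h2 <;> first | rfl | omega | (exact absurd ⟨h2, rfl⟩ h1)

lemma sendStep_trans_ne {r q : Fin m} (s : BState m m) (h : r ≠ q) :
    (sendStep id s (some q)).trans r = s.trans r := by
  rw [sendStep_some_trans]; simp [h]

end Aux1b
section Aux2

variable {m : ℕ} {B : ℕ}

lemma run_congr {n : ℕ} (cap : Fin n → ℕ) (qv : Fin n → Fin m) :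
    ∀ (σ : List (BEvent n)) (k : ℕ) (s : BState n m) (a b : ℕ → Option (Fin n)),
    (∀ j, k ≤ j → j < k + nsends σ → a j = b j) →
    run cap qv a σ k s = run cap qv b σ k s := by
  intro σ
  induction σ with
  | nil => intro k s a b h; rfl
  | cons e es ih =>
    intro k s a b h
    cases e with
    | arrive q => exact ih k _ a b (by simpa [nsends] using h)
    | send =>
      have hk : a k = b k := h k le_rfl (by simp only [nsends]; omega)
      simp only [run, hk]
      exact ih (k+1) _ a b (fun j h1 h2 => h j (by omega) (by simp [nsends] at h2 ⊢; omega))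

lemma feasible_congr {n : ℕ} (cap : Fin n → ℕ) (qv : Fin n → Fin m) :
    ∀ (σ : List (BEvent n)) (k : ℕ) (s : BState n m) (a b : ℕ → Option (Fin n)),
    (∀ j, k ≤ j → j < k + nsends σ → a j = b j) →
    Feasible cap qv a σ k s → Feasible cap qv b σ k s := by
  intro σ
  induction σ with
  | nil => intro k s a b h hf; trivial
  | cons e es ih =>
    intro k s a b h hf
    cases e with
    | arrive q => exact ih k _ a b (by simpa [nsends] using h) hf
    | send =>
      have hk : a k = b k := h k le_rfl (by simp only [nsends]; omega)
      obtain ⟨h1, h2⟩ := hf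
      refine ⟨by rw [← hk]; exact h1, ?_⟩
      rw [← hk]
      exact ih (k+1) _ a b (fun j h1 h2 => h j (by omega) (by simp [nsends] at h2 ⊢; omega)) h2

lemma greedy_feasible {n : ℕ} (v : Fin m → ℝ) (cap : Fin n → ℕ) (qv : Fin n → Fin m)
    (g : ℕ → Option (Fin n)) :
    ∀ (σ : List (BEvent n)) (k : ℕ) (s : BState n m),
    GreedyFeasible v cap qv g σ k s → Feasible cap qv g σ k s := by
  intro σ
  induction σ with
  | nil => intro k s h; trivial
  | cons e es ih =>
    intro k s h
    cases e with
    | arrive q => exact ih k _ h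
    | send =>
      obtain ⟨h1, h2⟩ := h
      refine ⟨?_, ih (k+1) _ h2⟩
      cases hg : g k with
      | none => simpa [hg] using h1
      | some q => simp only [hg] at h1 ⊢; exact h1.1

/-- at a send event where greedy's top queue is non-empty, greedy serves `t`. -/
lemma greedy_serves_top (v : Fin m → ℝ) (hmono : StrictMono v) (t : Fin m)
    (htop : ∀ q : Fin m, q ≤ t) {g : ℕ → Option (Fin m)} {es : List (BEvent m)} {k : ℕ}
    {s : BState m m}
    (h : GreedyFeasible v (fun _ => B) id g (BEvent.send :: es) k s)
    (hq : 0 < s.queue t) : g k = some t := by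
  obtain ⟨h1, _⟩ := h
  cases hg : g k with
  | none => simp only [hg] at h1; exact absurd (h1 t) (by omega)
  | some q =>
    simp only [hg] at h1
    have hle : v (id t) ≤ v (id q) := h1.2 t hq
    have : t ≤ q := (hmono.le_iff_le).mp (by simpa using hle)
    have : q = t := le_antisymm (htop q) this
    rw [this]

end Aux2
section Aux3

variable {m B : ℕ}

lemma sendStep_queue_le (s : BState m m) (o : Option (Fin m)) (r : Fin m) :
    (sendStep id s o).queue r ≤ s.queue r := by
  cases o with
  | none => simp [sendStep_none]
  | some q => rw [sendStep_some_queue]; split <;> omega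

lemma sendStep_acc (s : BState m m) (o : Option (Fin m)) (r : Fin m) :
    (sendStep id s o).acc r = s.acc r := by
  cases o with
  | none => simp [sendStep_none]
  | some q => rw [sendStep_some_acc]

/-- Part 1 coupling: greedy keeps the top queue lower and accepts at least as
many top-value packets. -/
lemma coupling_top (v : Fin m → ℝ) (hmono : StrictMono v) (t : Fin m)
    (htop : ∀ q : Fin m, q ≤ t) (d g : ℕ → Option (Fin m)) :
    ∀ (σ : List (BEvent m)) (k kg : ℕ) (s sg : BState m m),
    Feasible (fun _ => B) id d σ k s →
    GreedyFeasible v (fun _ => B) id g σ kg sg →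
    sg.queue t ≤ s.queue t → s.acc t ≤ sg.acc t →
    (run (fun _ => B) id g σ kg sg).queue t ≤ (run (fun _ => B) id d σ k s).queue t ∧
    (run (fun _ => B) id d σ k s).acc t ≤ (run (fun _ => B) id g σ kg sg).acc t := by
  intro σ
  induction σ with
  | nil => intro k kg s sg _ _ h1 h2; exact ⟨h1, h2⟩
  | cons e es ih =>
    intro k kg s sg hf hgf hq ha
    cases e with
    | arrive q =>
      refine ih k kg _ _ hf hgf ?_ ?_
      · rw [arriveStep_queue, arriveStep_queue]
        by_cases hqt : t = q
        · subst hqt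
          by_cases hb1 : s.queue t < B <;> by_cases hb2 : sg.queue t < B <;>
            simp [hb1, hb2] <;> omega
        · simp [hqt]; exact hq
      · rw [arriveStep_acc, arriveStep_acc]
        by_cases hqt : t = q
        · subst hqt
          by_cases hb1 : s.queue t < B <;> by_cases hb2 : sg.queue t < B <;>
            simp [hb1, hb2] <;> omega
        · simp [hqt]; exact ha
    | send =>
      obtain ⟨h1, h2⟩ := hf
      have hgf2 := hgf.2
      refine ih (k+1) (kg+1) _ _ h2 hgf2 ?_ ?_
      · by_cases hsg : 0 < sg.queue t
        · have hgk : g kg = some t := greedy_serves_top v hmono t htop hgf hsg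
          rw [hgk, sendStep_some_queue]
          have := sendStep_queue_le s (d k) t
          have hd : s.queue t - 1 ≤ (sendStep id s (d k)).queue t := by
            cases hdk : d k with
            | none => rw [sendStep_none]; omega
            | some x => rw [sendStep_some_queue]; split <;> omega
          simp [hsg]
          omega
        · have := sendStep_queue_le sg (g kg) t
          omega
      · rw [sendStep_acc, sendStep_acc]; exact ha

end Aux3
section Aux4

variable {m : ℕ}

/-- `Good B t d σ k s`: along the run of `d` from `s`, the top queue `t` stays
non-empty until a `t`-arrival finds it full (which happens). -/
def Good (B : ℕ) (t : Fin m) (d : ℕ → Option (Fin m)) :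
    List (BEvent m) → ℕ → BState m m → Prop
  | [], _, _ => False
  | BEvent.arrive q :: es, k, s =>
      if q = t ∧ s.queue t = B then True
      else Good B t d es k (arriveStep (fun _ => B) id s q)
  | BEvent.send :: es, k, s =>
      1 ≤ (sendStep id s (d k)).queue t ∧
        Good B t d es (k + 1) (sendStep id s (d k))

/-- pre-resolution coupling relation. -/
def Rel1 (t x : Fin m) (ε : ℕ) (s s' : BState m m) : Prop :=
  s'.queue t + 1 = s.queue t ∧ s'.queue x = s.queue x + ε ∧
  (∀ r, r ≠ t → r ≠ x → s'.queue r = s.queue r) ∧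
  s'.acc t = s.acc t ∧ s'.acc x + (1 - ε) = s.acc x ∧
  (∀ r, r ≠ t → r ≠ x → s'.acc r = s.acc r) ∧
  s'.trans t = s.trans t + 1 ∧ s'.trans x + 1 = s.trans x ∧
  (∀ r, r ≠ t → r ≠ x → s'.trans r = s.trans r)

/-- post-resolution coupling relation. -/
def Rel2 (t x : Fin m) (ε a c : ℕ) (s s' : BState m m) : Prop :=
  s'.queue t = s.queue t ∧ s'.queue x = s.queue x + ε ∧
  (∀ r, r ≠ t → r ≠ x → s'.queue r = s.queue r) ∧
  s'.acc t = s.acc t + 1 ∧ s'.acc x + a = s.acc x ∧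
  (∀ r, r ≠ t → r ≠ x → s'.acc r = s.acc r) ∧
  s'.trans t = s.trans t + 1 ∧ s'.trans x + c = s.trans x ∧
  (∀ r, r ≠ t → r ≠ x → s'.trans r = s.trans r)

def FlagsOK (ε a c : ℕ) : Prop :=
  (ε = 1 ∧ a = 0 ∧ c = 1) ∨ (ε = 0 ∧ a = 1 ∧ c = 1) ∨ (ε = 0 ∧ a = 0 ∧ c = 0)

variable {B : ℕ} {t x : Fin m}

lemma rel1_arrive (hx : x ≠ t) {ε : ℕ} {s s' : BState m m} (hε : ε ≤ 1)
    (hrel : Rel1 t x ε s s') (q : Fin m) :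
    (¬(q = t ∧ s.queue t = B) ∧ ∃ ε', ε' ≤ 1 ∧
      Rel1 t x ε' (arriveStep (fun _ => B) id s q) (arriveStep (fun _ => B) id s' q)) ∨
    (q = t ∧ s.queue t = B ∧
      Rel2 t x ε (1 - ε) 1 (arriveStep (fun _ => B) id s q)
        (arriveStep (fun _ => B) id s' q)) := by
  obtain ⟨hq1, hq2, hq3, ha1, ha2, ha3, ht1, ht2, ht3⟩ := hrel
  by_cases hqt : q = t
  · subst hqt
    by_cases hB : s.queue q = B
    · -- resolution: d rejects, d' accepts
      right
      refine ⟨rfl, hB, ?_, ?_, ?_, ?_, ?_, ?_, ?_, ?_, ?_⟩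
      · rw [arriveStep_queue_self, arriveStep_queue_self]; split_ifs <;> omega
      · rw [arriveStep_queue_ne _ hx, arriveStep_queue_ne _ hx]; exact hq2
      · intro r h1 h2
        rw [arriveStep_queue_ne _ h1, arriveStep_queue_ne _ h1]; exact hq3 r h1 h2
      · rw [arriveStep_acc_self, arriveStep_acc_self]; split_ifs <;> omega
      · rw [arriveStep_acc_ne _ hx, arriveStep_acc_ne _ hx]; omega
      · intro r h1 h2
        rw [arriveStep_acc_ne _ h1, arriveStep_acc_ne _ h1]; exact ha3 r h1 h2
      · rw [arriveStep_trans, arriveStep_trans]; exact ht1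
      · rw [arriveStep_trans, arriveStep_trans]; omega
      · intro r h1 h2
        rw [arriveStep_trans, arriveStep_trans]; exact ht3 r h1 h2
    · left
      refine ⟨fun h => hB h.2, ε, hε, ?_, ?_, ?_, ?_, ?_, ?_, ?_, ?_, ?_⟩
      · rw [arriveStep_queue_self, arriveStep_queue_self]; split_ifs <;> omega
      · rw [arriveStep_queue_ne _ hx, arriveStep_queue_ne _ hx]; exact hq2
      · intro r h1 h2
        rw [arriveStep_queue_ne _ h1, arriveStep_queue_ne _ h1]; exact hq3 r h1 h2
      · rw [arriveStep_acc_self, arriveStep_acc_self]; split_ifs <;> omega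
      · rw [arriveStep_acc_ne _ hx, arriveStep_acc_ne _ hx]; exact ha2
      · intro r h1 h2
        rw [arriveStep_acc_ne _ h1, arriveStep_acc_ne _ h1]; exact ha3 r h1 h2
      · rw [arriveStep_trans, arriveStep_trans]; exact ht1
      · rw [arriveStep_trans, arriveStep_trans]; exact ht2
      · intro r h1 h2
        rw [arriveStep_trans, arriveStep_trans]; exact ht3 r h1 h2
  · left
    refine ⟨fun h => hqt h.1, ?_⟩
    by_cases hqx : q = x
    · subst hqx
      refine ⟨if s.queue q < B ∧ ¬ s'.queue q < B then 0 else ε, by split_ifs <;> omega,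
        ?_, ?_, ?_, ?_, ?_, ?_, ?_, ?_, ?_⟩
      · rw [arriveStep_queue_ne _ (fun h : t = q => hqt h.symm),
          arriveStep_queue_ne _ (fun h : t = q => hqt h.symm)]; exact hq1
      · rw [arriveStep_queue_self, arriveStep_queue_self]; split_ifs <;> omega
      · intro r h1 h2
        rw [arriveStep_queue_ne _ h2, arriveStep_queue_ne _ h2]; exact hq3 r h1 h2
      · rw [arriveStep_acc_ne _ (fun h : t = q => hqt h.symm),
          arriveStep_acc_ne _ (fun h : t = q => hqt h.symm)]; exact ha1
      · rw [arriveStep_acc_self, arriveStep_acc_self]; split_ifs <;> omega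
      · intro r h1 h2
        rw [arriveStep_acc_ne _ h2, arriveStep_acc_ne _ h2]; exact ha3 r h1 h2
      · rw [arriveStep_trans, arriveStep_trans]; exact ht1
      · rw [arriveStep_trans, arriveStep_trans]; exact ht2
      · intro r h1 h2
        rw [arriveStep_trans, arriveStep_trans]; exact ht3 r h1 h2
    · have hq : s'.queue q = s.queue q := hq3 q hqt hqx
      have ha : s'.acc q = s.acc q := ha3 q hqt hqx
      refine ⟨ε, hε, ?_, ?_, ?_, ?_, ?_, ?_, ?_, ?_, ?_⟩
      · rw [arriveStep_queue_ne _ (fun h : t = q => hqt h.symm),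
          arriveStep_queue_ne _ (fun h : t = q => hqt h.symm)]; exact hq1
      · rw [arriveStep_queue_ne _ (fun h : x = q => hqx h.symm),
          arriveStep_queue_ne _ (fun h : x = q => hqx h.symm)]; exact hq2
      · intro r h1 h2
        by_cases hrq : r = q
        · subst hrq
          rw [arriveStep_queue_self, arriveStep_queue_self]; split_ifs <;> omega
        · rw [arriveStep_queue_ne _ hrq, arriveStep_queue_ne _ hrq]; exact hq3 r h1 h2
      · rw [arriveStep_acc_ne _ (fun h : t = q => hqt h.symm),
          arriveStep_acc_ne _ (fun h : t = q => hqt h.symm)]; exact ha1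
      · rw [arriveStep_acc_ne _ (fun h : x = q => hqx h.symm),
          arriveStep_acc_ne _ (fun h : x = q => hqx h.symm)]; exact ha2
      · intro r h1 h2
        by_cases hrq : r = q
        · subst hrq
          rw [arriveStep_acc_self, arriveStep_acc_self]; split_ifs <;> omega
        · rw [arriveStep_acc_ne _ hrq, arriveStep_acc_ne _ hrq]; exact ha3 r h1 h2
      · rw [arriveStep_trans, arriveStep_trans]; exact ht1
      · rw [arriveStep_trans, arriveStep_trans]; exact ht2
      · intro r h1 h2
        rw [arriveStep_trans, arriveStep_trans]; exact ht3 r h1 h2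

end Aux4
section Aux5

variable {m : ℕ} {B : ℕ} {t x : Fin m}

lemma rel2_arrive (hx : x ≠ t) {ε a c : ℕ} {s s' : BState m m}
    (hfl : FlagsOK ε a c) (hrel : Rel2 t x ε a c s s') (q : Fin m) :
    ∃ ε' a', FlagsOK ε' a' c ∧
      Rel2 t x ε' a' c (arriveStep (fun _ => B) id s q)
        (arriveStep (fun _ => B) id s' q) := by
  obtain ⟨hq1, hq2, hq3, ha1, ha2, ha3, ht1, ht2, ht3⟩ := hrel
  unfold FlagsOK at hfl
  by_cases hqx : q = x
  · subst hqx
    refine ⟨if s.queue q < B ∧ ¬ s'.queue q < B then 0 else ε,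
      if s.queue q < B ∧ ¬ s'.queue q < B then a + 1 else a, ?_,
      ?_, ?_, ?_, ?_, ?_, ?_, ?_, ?_, ?_⟩
    · unfold FlagsOK; split_ifs with h <;> omega
    · rw [arriveStep_queue_ne _ (fun h : t = q => hx h.symm),
        arriveStep_queue_ne _ (fun h : t = q => hx h.symm)]; exact hq1
    · rw [arriveStep_queue_self, arriveStep_queue_self]; split_ifs <;> omega
    · intro r h1 h2
      rw [arriveStep_queue_ne _ h2, arriveStep_queue_ne _ h2]; exact hq3 r h1 h2
    · rw [arriveStep_acc_ne _ (fun h : t = q => hx h.symm),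
        arriveStep_acc_ne _ (fun h : t = q => hx h.symm)]; exact ha1
    · rw [arriveStep_acc_self, arriveStep_acc_self]; split_ifs <;> omega
    · intro r h1 h2
      rw [arriveStep_acc_ne _ h2, arriveStep_acc_ne _ h2]; exact ha3 r h1 h2
    · rw [arriveStep_trans, arriveStep_trans]; exact ht1
    · rw [arriveStep_trans, arriveStep_trans]; exact ht2
    · intro r h1 h2
      rw [arriveStep_trans, arriveStep_trans]; exact ht3 r h1 h2
  · -- q ≠ x: queues at q agree between s and s'
    have hqq : s'.queue q = s.queue q := by
      by_cases hqt : q = t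
      · subst hqt; exact hq1
      · exact hq3 q hqt hqx
    refine ⟨ε, a, by unfold FlagsOK; omega, ?_, ?_, ?_, ?_, ?_, ?_, ?_, ?_, ?_⟩
    · by_cases hqt : q = t
      · subst hqt
        rw [arriveStep_queue_self, arriveStep_queue_self]; split_ifs <;> omega
      · rw [arriveStep_queue_ne _ (fun h : t = q => hqt h.symm),
          arriveStep_queue_ne _ (fun h : t = q => hqt h.symm)]; exact hq1
    · rw [arriveStep_queue_ne _ (fun h : x = q => hqx h.symm),
        arriveStep_queue_ne _ (fun h : x = q => hqx h.symm)]; exact hq2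
    · intro r h1 h2
      by_cases hrq : r = q
      · subst hrq
        rw [arriveStep_queue_self, arriveStep_queue_self]; split_ifs <;> omega
      · rw [arriveStep_queue_ne _ hrq, arriveStep_queue_ne _ hrq]; exact hq3 r h1 h2
    · by_cases hqt : q = t
      · subst hqt
        rw [arriveStep_acc_self, arriveStep_acc_self]; split_ifs <;> omega
      · rw [arriveStep_acc_ne _ (fun h : t = q => hqt h.symm),
          arriveStep_acc_ne _ (fun h : t = q => hqt h.symm)]; exact ha1
    · rw [arriveStep_acc_ne _ (fun h : x = q => hqx h.symm),
        arriveStep_acc_ne _ (fun h : x = q => hqx h.symm)]; exact ha2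
    · intro r h1 h2
      by_cases hrq : r = q
      · subst hrq
        have h5 := ha3 r h1 h2
        have h6 := hq3 r h1 h2
        rw [arriveStep_acc_self, arriveStep_acc_self]; split_ifs <;> omega
      · rw [arriveStep_acc_ne _ hrq, arriveStep_acc_ne _ hrq]; exact ha3 r h1 h2
    · rw [arriveStep_trans, arriveStep_trans]; exact ht1
    · rw [arriveStep_trans, arriveStep_trans]; exact ht2
    · intro r h1 h2
      rw [arriveStep_trans, arriveStep_trans]; exact ht3 r h1 h2

lemma rel1_send_t (hx : x ≠ t) {ε : ℕ} {s s' : BState m m}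
    (hrel : Rel1 t x ε s s') (h2 : 2 ≤ s.queue t) :
    Rel1 t x ε (sendStep id s (some t)) (sendStep id s' (some t)) ∧
      0 < s'.queue t := by
  obtain ⟨hq1, hq2, hq3, ha1, ha2, ha3, ht1, ht2, ht3⟩ := hrel
  refine ⟨⟨?_, ?_, ?_, ?_, ?_, ?_, ?_, ?_, ?_⟩, by omega⟩
  · rw [sendStep_queue_self, sendStep_queue_self]; split_ifs <;> omega
  · rw [sendStep_queue_ne _ hx, sendStep_queue_ne _ hx]; exact hq2
  · intro r h1 h'
    rw [sendStep_queue_ne _ h1, sendStep_queue_ne _ h1]; exact hq3 r h1 h'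
  · rw [sendStep_some_acc, sendStep_some_acc]; exact ha1
  · rw [sendStep_some_acc, sendStep_some_acc]; exact ha2
  · intro r h1 h'
    rw [sendStep_some_acc, sendStep_some_acc]; exact ha3 r h1 h'
  · rw [sendStep_trans_self, sendStep_trans_self]; split_ifs <;> omega
  · rw [sendStep_trans_ne _ hx, sendStep_trans_ne _ hx]; exact ht2
  · intro r h1 h'
    rw [sendStep_trans_ne _ h1, sendStep_trans_ne _ h1]; exact ht3 r h1 h'

lemma rel1_send_other (hx : x ≠ t) {ε : ℕ} {s s' : BState m m} (hε : ε ≤ 1)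
    (hrel : Rel1 t x ε s s') {y : Fin m} (hyt : y ≠ t) (hy : 0 < s.queue y) :
    Rel1 t x ε (sendStep id s (some y)) (sendStep id s' (some y)) ∧
      0 < s'.queue y := by
  obtain ⟨hq1, hq2, hq3, ha1, ha2, ha3, ht1, ht2, ht3⟩ := hrel
  by_cases hyx : y = x
  · subst hyx
    refine ⟨⟨?_, ?_, ?_, ?_, ?_, ?_, ?_, ?_, ?_⟩, by omega⟩
    · rw [sendStep_queue_ne _ (fun h : t = y => hyt h.symm),
        sendStep_queue_ne _ (fun h : t = y => hyt h.symm)]; exact hq1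
    · rw [sendStep_queue_self, sendStep_queue_self]; split_ifs <;> omega
    · intro r h1 h'
      rw [sendStep_queue_ne _ h', sendStep_queue_ne _ h']; exact hq3 r h1 h'
    · rw [sendStep_some_acc, sendStep_some_acc]; exact ha1
    · rw [sendStep_some_acc, sendStep_some_acc]; exact ha2
    · intro r h1 h'
      rw [sendStep_some_acc, sendStep_some_acc]; exact ha3 r h1 h'
    · rw [sendStep_trans_ne _ (fun h : t = y => hyt h.symm),
        sendStep_trans_ne _ (fun h : t = y => hyt h.symm)]; exact ht1
    · rw [sendStep_trans_self, sendStep_trans_self]; split_ifs <;> omega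
    · intro r h1 h'
      rw [sendStep_trans_ne _ h', sendStep_trans_ne _ h']; exact ht3 r h1 h'
  · have hqy : s'.queue y = s.queue y := hq3 y hyt hyx
    refine ⟨⟨?_, ?_, ?_, ?_, ?_, ?_, ?_, ?_, ?_⟩, by omega⟩
    · rw [sendStep_queue_ne _ (fun h : t = y => hyt h.symm),
        sendStep_queue_ne _ (fun h : t = y => hyt h.symm)]; exact hq1
    · rw [sendStep_queue_ne _ (fun h : x = y => hyx h.symm),
        sendStep_queue_ne _ (fun h : x = y => hyx h.symm)]; exact hq2
    · intro r h1 h'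
      by_cases hry : r = y
      · subst hry
        rw [sendStep_queue_self, sendStep_queue_self]; split_ifs <;> omega
      · rw [sendStep_queue_ne _ hry, sendStep_queue_ne _ hry]; exact hq3 r h1 h'
    · rw [sendStep_some_acc, sendStep_some_acc]; exact ha1
    · rw [sendStep_some_acc, sendStep_some_acc]; exact ha2
    · intro r h1 h'
      rw [sendStep_some_acc, sendStep_some_acc]; exact ha3 r h1 h'
    · rw [sendStep_trans_ne _ (fun h : t = y => hyt h.symm),
        sendStep_trans_ne _ (fun h : t = y => hyt h.symm)]; exact ht1
    · rw [sendStep_trans_ne _ (fun h : x = y => hyx h.symm),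
        sendStep_trans_ne _ (fun h : x = y => hyx h.symm)]; exact ht2
    · intro r h1 h'
      by_cases hry : r = y
      · subst hry
        have h5 := ht3 r h1 h'
        have h6 := hq3 r h1 h'
        rw [sendStep_trans_self, sendStep_trans_self]; split_ifs <;> omega
      · rw [sendStep_trans_ne _ hry, sendStep_trans_ne _ hry]; exact ht3 r h1 h'

lemma rel2_send_some {ε a c : ℕ} {s s' : BState m m}
    (hrel : Rel2 t x ε a c s s') {y : Fin m} (hy : 0 < s.queue y) :
    Rel2 t x ε a c (sendStep id s (some y)) (sendStep id s' (some y)) ∧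
      0 < s'.queue y := by
  obtain ⟨hq1, hq2, hq3, ha1, ha2, ha3, ht1, ht2, ht3⟩ := hrel
  have hge : s.queue y ≤ s'.queue y := by
    by_cases h1 : y = t
    · subst h1; omega
    · by_cases h2 : y = x
      · subst h2; omega
      · rw [hq3 y h1 h2]
  refine ⟨⟨?_, ?_, ?_, ?_, ?_, ?_, ?_, ?_, ?_⟩, by omega⟩
  · by_cases h1 : y = t
    · subst h1
      rw [sendStep_queue_self, sendStep_queue_self]; split_ifs <;> omega
    · rw [sendStep_queue_ne _ (fun h : t = y => h1 h.symm),
        sendStep_queue_ne _ (fun h : t = y => h1 h.symm)]; exact hq1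
  · by_cases h2 : y = x
    · subst h2
      rw [sendStep_queue_self, sendStep_queue_self]; split_ifs <;> omega
    · rw [sendStep_queue_ne _ (fun h : x = y => h2 h.symm),
        sendStep_queue_ne _ (fun h : x = y => h2 h.symm)]; exact hq2
  · intro r h1 h'
    by_cases hry : r = y
    · subst hry
      have : s'.queue r = s.queue r := hq3 r h1 h'
      rw [sendStep_queue_self, sendStep_queue_self]; split_ifs <;> omega
    · rw [sendStep_queue_ne _ hry, sendStep_queue_ne _ hry]; exact hq3 r h1 h'
  · rw [sendStep_some_acc, sendStep_some_acc]; exact ha1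
  · rw [sendStep_some_acc, sendStep_some_acc]; exact ha2
  · intro r h1 h'
    rw [sendStep_some_acc, sendStep_some_acc]; exact ha3 r h1 h'
  · by_cases h1 : y = t
    · subst h1
      rw [sendStep_trans_self, sendStep_trans_self]; split_ifs <;> omega
    · rw [sendStep_trans_ne _ (fun h : t = y => h1 h.symm),
        sendStep_trans_ne _ (fun h : t = y => h1 h.symm)]; exact ht1
  · by_cases h2 : y = x
    · subst h2
      rw [sendStep_trans_self, sendStep_trans_self]; split_ifs <;> omega
    · rw [sendStep_trans_ne _ (fun h : x = y => h2 h.symm),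
        sendStep_trans_ne _ (fun h : x = y => h2 h.symm)]; exact ht2
  · intro r h1 h'
    by_cases hry : r = y
    · subst hry
      have h5 : s'.queue r = s.queue r := hq3 r h1 h'
      have h6 := ht3 r h1 h'
      rw [sendStep_trans_self, sendStep_trans_self]; split_ifs <;> omega
    · rw [sendStep_trans_ne _ hry, sendStep_trans_ne _ hry]; exact ht3 r h1 h'

lemma rel2_send_none (hx : x ≠ t) {ε a c : ℕ} {s s' : BState m m}
    (hfl : FlagsOK ε a c) (hrel : Rel2 t x ε a c s s')
    (hall : ∀ r, s.queue r = 0) :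
    (ε = 0 ∧ ∀ r, s'.queue r = 0) ∨
    (ε = 1 ∧ 0 < s'.queue x ∧ FlagsOK 0 0 0 ∧
      Rel2 t x 0 0 0 s (sendStep id s' (some x))) := by
  obtain ⟨hq1, hq2, hq3, ha1, ha2, ha3, ht1, ht2, ht3⟩ := hrel
  unfold FlagsOK at hfl
  by_cases hε : ε = 0
  · subst hε
    left
    refine ⟨rfl, fun r => ?_⟩
    by_cases h1 : r = t
    · subst h1; rw [hq1, hall r]
    · by_cases h2 : r = x
      · subst h2; rw [hq2, hall r]
      · rw [hq3 r h1 h2, hall r]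
  · right
    have hε1 : ε = 1 := by omega
    subst hε1
    have hax : 0 < s'.queue x := by rw [hq2]; omega
    refine ⟨rfl, hax, by unfold FlagsOK; omega, ?_, ?_, ?_, ?_, ?_, ?_, ?_, ?_, ?_⟩
    · rw [sendStep_queue_ne _ (fun h : t = x => hx h.symm)]; exact hq1
    · rw [sendStep_queue_self]; split_ifs <;> omega
    · intro r h1 h'
      rw [sendStep_queue_ne _ h']; exact hq3 r h1 h'
    · rw [sendStep_some_acc]; omega
    · rw [sendStep_some_acc]; omega
    · intro r h1 h'
      rw [sendStep_some_acc]; exact ha3 r h1 h'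
    · rw [sendStep_trans_ne _ (fun h : t = x => hx h.symm)]; exact ht1
    · rw [sendStep_trans_self]; split_ifs <;> omega
    · intro r h1 h'
      rw [sendStep_trans_ne _ h']; exact ht3 r h1 h'

end Aux5
section Aux6

variable {m : ℕ} {B : ℕ} {t x : Fin m}

lemma lift_send {d' : ℕ → Option (Fin m)} (k : ℕ) (o : Option (Fin m))
    (s' : BState m m) (es : List (BEvent m))
    (hcond : match o with
      | some q => 0 < s'.queue q
      | none => ∀ q, s'.queue q = 0)
    (hfe : Feasible (fun _ => B) id d' es (k + 1) (sendStep id s' o)) :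
    Feasible (fun _ => B) id (Function.update d' k o) (BEvent.send :: es) k s' ∧
    run (fun _ => B) id (Function.update d' k o) (BEvent.send :: es) k s' =
      run (fun _ => B) id d' es (k + 1) (sendStep id s' o) := by
  have hag : ∀ j, k + 1 ≤ j → j < k + 1 + nsends es →
      Function.update d' k o j = d' j := by
    intro j h1 _; exact Function.update_of_ne (by omega) _ _
  constructor
  · refine ⟨?_, ?_⟩
    · simp only [Function.update_self]; exact hcond
    · simp only [Function.update_self]
      exact feasible_congr _ _ es (k+1) _ d' (Function.update d' k o)
        (fun j h1 h2 => (hag j h1 h2).symm) hfe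
  · show run (fun _ => B) id (Function.update d' k o) es (k+1)
        (sendStep id s' (Function.update d' k o k)) = _
    rw [Function.update_self]
    exact run_congr _ _ es (k+1) _ _ d' hag

/-- The mimicking schedule: given the coupling relation, there is a feasible
schedule from `s'` ending in the post-resolution relation. -/
lemma mimic (hx : x ≠ t) (d : ℕ → Option (Fin m)) :
    ∀ (σ : List (BEvent m)) (k : ℕ) (s s' : BState m m),
    Feasible (fun _ => B) id d σ k s →
    ((∃ ε, ε ≤ 1 ∧ Rel1 t x ε s s' ∧ Good B t d σ k s) ∨
      (∃ ε a c, FlagsOK ε a c ∧ Rel2 t x ε a c s s')) →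
    ∃ d', Feasible (fun _ => B) id d' σ k s' ∧
      ∃ ε a c, FlagsOK ε a c ∧
        Rel2 t x ε a c (run (fun _ => B) id d σ k s)
          (run (fun _ => B) id d' σ k s') := by
  intro σ
  induction σ with
  | nil =>
    intro k s s' _ hinv
    rcases hinv with ⟨ε, hε, hrel, hgood⟩ | ⟨ε, a, c, hfl, hrel⟩
    · exact absurd hgood (by simp [Good])
    · exact ⟨fun _ => none, trivial, ε, a, c, hfl, hrel⟩
  | cons e es ih =>
    intro k s s' hf hinv
    cases e with
    | arrive q =>
      have hf' : Feasible (fun _ => B) id d es k (arriveStep (fun _ => B) id s q) := hf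
      rcases hinv with ⟨ε, hε, hrel, hgood⟩ | ⟨ε, a, c, hfl, hrel⟩
      · rcases rel1_arrive hx hε hrel q with ⟨hcond, ε', hε', hrel'⟩ | ⟨hq, hB, hrel2⟩
        · have hgood' : Good B t d es k (arriveStep (fun _ => B) id s q) := by
            simp only [Good] at hgood; rwa [if_neg hcond] at hgood
          obtain ⟨d', hfe, out⟩ := ih k _ _ hf' (Or.inl ⟨ε', hε', hrel', hgood'⟩)
          exact ⟨d', hfe, out⟩
        · have hfl : FlagsOK ε (1 - ε) 1 := by unfold FlagsOK; omega
          obtain ⟨d', hfe, out⟩ := ih k _ _ hf' (Or.inr ⟨ε, 1 - ε, 1, hfl, hrel2⟩)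
          exact ⟨d', hfe, out⟩
      · obtain ⟨ε', a', hfl', hrel'⟩ := rel2_arrive hx hfl hrel q
        obtain ⟨d', hfe, out⟩ := ih k _ _ hf' (Or.inr ⟨ε', a', c, hfl', hrel'⟩)
        exact ⟨d', hfe, out⟩
    | send =>
      obtain ⟨h1, h2⟩ := hf
      cases hdk : d k with
      | some y =>
        rw [hdk] at h1 h2
        rcases hinv with ⟨ε, hε, hrel, hgood⟩ | ⟨ε, a, c, hfl, hrel⟩
        · simp only [Good, hdk] at hgood
          obtain ⟨hg1, hg2⟩ := hgood
          have key : Rel1 t x ε (sendStep id s (some y)) (sendStep id s' (some y)) ∧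
              0 < s'.queue y := by
            by_cases hyt : y = t
            · subst hyt
              have h2t : 2 ≤ s.queue y := by
                have := hrel.1
                rw [sendStep_queue_self] at hg1; split_ifs at hg1 <;> omega
              exact rel1_send_t hx hrel h2t
            · exact rel1_send_other hx hε hrel hyt h1
          obtain ⟨hrel', hpos⟩ := key
          obtain ⟨d'', hfe, out⟩ := ih (k+1) _ _ h2 (Or.inl ⟨ε, hε, hrel', hg2⟩)
          obtain ⟨hfeas, hruneq⟩ := lift_send k (some y) s' es hpos hfe
          refine ⟨Function.update d'' k (some y), hfeas, ?_⟩
          rw [hruneq]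
          simp only [run, hdk]
          exact out
        · obtain ⟨hrel', hpos⟩ := rel2_send_some hrel h1
          obtain ⟨d'', hfe, out⟩ := ih (k+1) _ _ h2 (Or.inr ⟨ε, a, c, hfl, hrel'⟩)
          obtain ⟨hfeas, hruneq⟩ := lift_send k (some y) s' es hpos hfe
          refine ⟨Function.update d'' k (some y), hfeas, ?_⟩
          rw [hruneq]
          simp only [run, hdk]
          exact out
      | none =>
        rw [hdk] at h1 h2
        rw [show sendStep id s none = s from rfl] at h2
        rcases hinv with ⟨ε, hε, hrel, hgood⟩ | ⟨ε, a, c, hfl, hrel⟩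
        · exact absurd (h1 t) (by have := hrel.1; omega)
        · rcases rel2_send_none hx hfl hrel h1 with ⟨hε0, hall'⟩ | ⟨hε1, hpos, hfl0, hrel0⟩
          · obtain ⟨d'', hfe, out⟩ := ih (k+1) s s' h2 (Or.inr ⟨ε, a, c, hfl, hrel⟩)
            obtain ⟨hfeas, hruneq⟩ :=
              lift_send k none s' es hall' (by rwa [show sendStep id s' none = s' from rfl])
            refine ⟨Function.update d'' k none, hfeas, ?_⟩
            rw [hruneq]
            simp only [run, hdk]
            exact out
          · obtain ⟨d'', hfe, out⟩ := ih (k+1) s _ h2 (Or.inr ⟨0, 0, 0, hfl0, hrel0⟩)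
            obtain ⟨hfeas, hruneq⟩ := lift_send k (some x) s' es hpos hfe
            refine ⟨Function.update d'' k (some x), hfeas, ?_⟩
            rw [hruneq]
            simp only [run, hdk]
            exact out

end Aux6
section Aux7

variable {m : ℕ} {B : ℕ} {t x : Fin m}

lemma rel2_benefit_acc (v : Fin m → ℝ) (hpos : ∀ i, 0 < v i) (hx : x ≠ t)
    (hvx : v x ≤ v t) {ε a c : ℕ} (hfl : FlagsOK ε a c) {s s' : BState m m}
    (hrel : Rel2 t x ε a c s s') :
    benefit v s ≤ benefit v s' ∧ s.acc t + 1 ≤ s'.acc t := by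
  obtain ⟨hq1, hq2, hq3, ha1, ha2, ha3, ht1, ht2, ht3⟩ := hrel
  have hc : c ≤ 1 := by unfold FlagsOK at hfl; omega
  refine ⟨?_, by omega⟩
  have key : ∀ i, v i * (s'.trans i : ℝ) =
      v i * (s.trans i : ℝ) + (if i = t then v t else 0) -
        (if i = x then (c : ℝ) * v x else 0) := by
    intro i
    by_cases h1 : i = t
    · subst h1
      rw [ht1, if_pos rfl, if_neg (Ne.symm hx)]
      push_cast
      ring
    · by_cases h2 : i = x
      · subst h2
        have : (s'.trans i : ℝ) = (s.trans i : ℝ) - c := by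
          have := ht2; push_cast [← this]; ring
        rw [this, if_neg h1, if_pos rfl]
        ring
      · rw [ht3 i h1 h2, if_neg h1, if_neg h2]
        ring
  have : benefit v s' = benefit v s + v t - (c : ℝ) * v x := by
    unfold benefit
    rw [show ∀ a b : ℝ, a + b - (c:ℝ) * v x = a + (b - (c:ℝ)*v x) from fun a b => by ring]
    rw [Finset.sum_congr rfl (fun i _ => key i)]
    rw [show (fun i => v i * (s.trans i : ℝ) + (if i = t then v t else 0) -
        (if i = x then (c : ℝ) * v x else 0)) = (fun i => v i * (s.trans i : ℝ) +
        ((if i = t then v t else 0) - (if i = x then (c : ℝ) * v x else 0))) from by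
      funext i; ring]
    rw [Finset.sum_add_distrib, Finset.sum_sub_distrib]
    simp [Finset.sum_ite_eq']
  rw [this]
  have hcv : (c : ℝ) * v x ≤ v t := by
    interval_cases c
    · simpa using le_of_lt (lt_of_lt_of_le (hpos x) hvx)
    · simpa using hvx
  linarith

end Aux7
section Aux8

variable {m : ℕ} {B : ℕ}

lemma goal_lift (v : Fin m → ℝ) (t : Fin m) {d d'' : ℕ → Option (Fin m)} {k : ℕ}
    {es : List (BEvent m)} {s : BState m m} {o : Option (Fin m)}
    (hcond : match o with
      | some q => 0 < s.queue q
      | none => ∀ q, s.queue q = 0)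
    (hdk : d k = o)
    (hf : Feasible (fun _ => B) id d'' es (k+1) (sendStep id s o))
    (hb : benefit v (run (fun _ => B) id d es (k+1) (sendStep id s o)) ≤
      benefit v (run (fun _ => B) id d'' es (k+1) (sendStep id s o)))
    (ha : (run (fun _ => B) id d es (k+1) (sendStep id s o)).acc t + 1 ≤
      (run (fun _ => B) id d'' es (k+1) (sendStep id s o)).acc t) :
    ∃ d', Feasible (fun _ => B) id d' (BEvent.send :: es) k s ∧
      benefit v (run (fun _ => B) id d (BEvent.send :: es) k s) ≤
        benefit v (run (fun _ => B) id d' (BEvent.send :: es) k s) ∧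
      (run (fun _ => B) id d (BEvent.send :: es) k s).acc t + 1 ≤
        (run (fun _ => B) id d' (BEvent.send :: es) k s).acc t := by
  obtain ⟨hfeas, hruneq⟩ := lift_send k o s es hcond hf
  refine ⟨Function.update d'' k o, hfeas, ?_, ?_⟩ <;>
    rw [hruneq] <;> simp only [run, hdk] <;> assumption

lemma lemD (v : Fin m → ℝ) (hpos : ∀ i, 0 < v i) (hmono : StrictMono v)
    (t : Fin m) (htop : ∀ q : Fin m, q ≤ t) (d g : ℕ → Option (Fin m)) :
    ∀ (σ : List (BEvent m)) (k kg : ℕ) (s sg : BState m m),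
    Feasible (fun _ => B) id d σ k s →
    GreedyFeasible v (fun _ => B) id g σ kg sg →
    s.queue t ≤ B →
    sg.queue t ≤ s.queue t →
    (sg.queue t = s.queue t ∨ ¬ Good B t d σ k s) →
    (run (fun _ => B) id d σ k s).acc t + sg.acc t <
      (run (fun _ => B) id g σ kg sg).acc t + s.acc t →
    ∃ d', Feasible (fun _ => B) id d' σ k s ∧
      benefit v (run (fun _ => B) id d σ k s) ≤
        benefit v (run (fun _ => B) id d' σ k s) ∧
      (run (fun _ => B) id d σ k s).acc t + 1 ≤
        (run (fun _ => B) id d' σ k s).acc t := by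
  intro σ
  induction σ with
  | nil =>
    intro k kg s sg _ _ _ _ _ hgain
    simp only [run] at hgain
    omega
  | cons e es ih =>
    intro k kg s sg hf hgf hsB hqle hmode hgain
    cases e with
    | arrive q =>
      have hf' : Feasible (fun _ => B) id d es k (arriveStep (fun _ => B) id s q) := hf
      have hgf' : GreedyFeasible v (fun _ => B) id g es kg
          (arriveStep (fun _ => B) id sg q) := hgf
      simp only [run] at hgain ⊢
      by_cases hqt : q = t
      · subst hqt
        by_cases hB : s.queue q < B
        · have hBg : sg.queue q < B := by omega
          refine ih k kg _ _ hf' hgf' ?_ ?_ ?_ ?_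
          · rw [arriveStep_queue_self]; split_ifs <;> omega
          · rw [arriveStep_queue_self, arriveStep_queue_self]; split_ifs <;> omega
          · rcases hmode with h | h
            · left; rw [arriveStep_queue_self, arriveStep_queue_self]; split_ifs <;> omega
            · right
              intro hgood
              exact h (by
                simp only [Good]
                rw [if_neg (show ¬(True ∧ s.queue q = B) from fun hc => by omega)]
                exact hgood)
          · rw [arriveStep_acc_self, arriveStep_acc_self]; split_ifs <;> omega
        · have hBeq : s.queue q = B := by omega
          rcases hmode with hsync | hng
          · have hBg : ¬ sg.queue q < B := by omega
            have e1 : arriveStep (fun _ => B) id s q = s := by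
              unfold arriveStep; rw [if_neg (by simpa using hB)]
            have e2 : arriveStep (fun _ => B) id sg q = sg := by
              unfold arriveStep; rw [if_neg (by simpa using hBg)]
            rw [e1] at hf' ⊢
            rw [e2] at hgf'
            rw [e1, e2] at hgain
            obtain ⟨d', hh1, hh2, hh3⟩ := ih k kg _ _ hf' hgf' hsB hqle (Or.inl hsync) hgain
            refine ⟨d', ?_, hh2, hh3⟩
            show Feasible (fun _ => B) id d' es k (arriveStep (fun _ => B) id s q)
            rw [e1]
            exact hh1
          · exact absurd (by simp [Good, hBeq] : Good B q d (BEvent.arrive q :: es) k s) hng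
      · have hgt : ∀ s0 : BState m m,
            (arriveStep (fun _ => B) id s0 q).queue t = s0.queue t :=
          fun s0 => arriveStep_queue_ne s0 (fun h : t = q => hqt h.symm)
        have hga : ∀ s0 : BState m m,
            (arriveStep (fun _ => B) id s0 q).acc t = s0.acc t :=
          fun s0 => arriveStep_acc_ne s0 (fun h : t = q => hqt h.symm)
        refine ih k kg _ _ hf' hgf' (by rw [hgt]; exact hsB) (by rw [hgt, hgt]; exact hqle)
          ?_ (by rw [hga, hga]; exact hgain)
        rcases hmode with h | h
        · left; rw [hgt, hgt]; exact h
        · right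
          intro hgood
          exact h (by
            simp only [Good]
            rw [if_neg (fun hc => hqt hc.1)]
            exact hgood)
    | send =>
      have hd1 := hf.1
      have hd2 := hf.2
      have hg2 := hgf.2
      simp only [run] at hgain
      cases hdk : d k with
      | none =>
        rw [hdk] at hd1 hd2 hgain
        rw [show sendStep id s none = s from rfl] at hd2 hgain
        have hst : s.queue t = 0 := hd1 t
        have hsg0 := sendStep_queue_le sg (g kg) t
        obtain ⟨d'', hfe, hb, ha⟩ := ih (k+1) (kg+1) s (sendStep id sg (g kg)) hd2 hg2
          hsB (by omega) (Or.inl (by omega))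
          (by rw [sendStep_acc]; exact hgain)
        exact goal_lift v t hd1 hdk hfe hb ha
      | some y =>
        rw [hdk] at hd1 hd2 hgain
        have hsbar_le := sendStep_queue_le s (some y) t
        by_cases hsgt : 0 < sg.queue t
        · have hgk : g kg = some t := greedy_serves_top v hmono t htop hgf hsgt
          rw [hgk] at hg2 hgain
          have hsg' : (sendStep id sg (some t)).queue t = sg.queue t - 1 := by
            rw [sendStep_queue_self]; split_ifs <;> omega
          by_cases hyt : y = t
          · subst hyt
            have hs' : (sendStep id s (some y)).queue y = s.queue y - 1 := by
              rw [sendStep_queue_self]; split_ifs <;> omega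
            have hmode' : (sendStep id sg (some y)).queue y =
                (sendStep id s (some y)).queue y ∨
                ¬ Good B y d es (k+1) (sendStep id s (some y)) := by
              rcases hmode with hs | hng
              · exact Or.inl (by omega)
              · by_cases hz : (sendStep id s (some y)).queue y = 0
                · exact Or.inl (by omega)
                · right
                  intro hgood
                  exact hng (by
                    simp only [Good]
                    rw [hdk]
                    exact ⟨by omega, hgood⟩)
            obtain ⟨d'', hfe, hb, ha⟩ := ih (k+1) (kg+1) _ _ hd2 hg2
              (by omega) (by omega) hmode'
              (by rw [sendStep_acc, sendStep_acc]; exact hgain)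
            exact goal_lift v y hd1 hdk hfe hb ha
          · have hst : 0 < s.queue t := by omega
            have hty : t ≠ y := fun h => hyt h.symm
            have hs' : (sendStep id s (some y)).queue t = s.queue t :=
              sendStep_queue_ne s hty
            by_cases hG : Good B t d es (k+1) (sendStep id s (some y))
            · -- the swap, via mimic
              have hrel1 : Rel1 t y 1 (sendStep id s (some y)) (sendStep id s (some t)) := by
                refine ⟨?_, ?_, ?_, ?_, ?_, ?_, ?_, ?_, ?_⟩
                · rw [sendStep_queue_self, sendStep_queue_ne _ hty]; split_ifs <;> omega
                · rw [sendStep_queue_ne _ hyt, sendStep_queue_self]; split_ifs <;> omega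
                · intro r h1 h2
                  rw [sendStep_queue_ne _ h1, sendStep_queue_ne _ h2]
                · rw [sendStep_some_acc, sendStep_some_acc]
                · rw [sendStep_some_acc, sendStep_some_acc]; omega
                · intro r h1 h2
                  rw [sendStep_some_acc, sendStep_some_acc]
                · rw [sendStep_trans_self, sendStep_trans_ne _ hty]; split_ifs <;> omega
                · rw [sendStep_trans_ne _ hyt, sendStep_trans_self]; split_ifs <;> omega
                · intro r h1 h2
                  rw [sendStep_trans_ne _ h1, sendStep_trans_ne _ h2]
              obtain ⟨d'', hfe, ε, a, c, hfl, hrel2⟩ :=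
                mimic hyt d es (k+1) _ _ hd2 (Or.inl ⟨1, le_rfl, hrel1, hG⟩)
              obtain ⟨hfeas, hruneq⟩ := lift_send k (some t) s es hst hfe
              have hvy : v y ≤ v t := hmono.le_iff_le.mpr (htop y)
              have hba := rel2_benefit_acc v hpos hyt hvy hfl hrel2
              refine ⟨Function.update d'' k (some t), hfeas, ?_, ?_⟩ <;>
                rw [hruneq] <;> simp only [run, hdk]
              · exact hba.1
              · exact hba.2
            · obtain ⟨d'', hfe, hb, ha⟩ := ih (k+1) (kg+1) _ _ hd2 hg2
                (by omega) (by omega) (Or.inr hG)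
                (by rw [sendStep_acc, sendStep_acc]; exact hgain)
              exact goal_lift v t hd1 hdk hfe hb ha
        · have hsg0 := sendStep_queue_le sg (g kg) t
          have hmode' : (sendStep id sg (g kg)).queue t =
              (sendStep id s (some y)).queue t ∨
              ¬ Good B t d es (k+1) (sendStep id s (some y)) := by
            by_cases hz : (sendStep id s (some y)).queue t = 0
            · exact Or.inl (by omega)
            · rcases hmode with hs | hng
              · exact Or.inl (by omega)
              · right
                intro hgood
                exact hng (by
                  simp only [Good]
                  rw [hdk]
                  exact ⟨by omega, hgood⟩)
          obtain ⟨d'', hfe, hb, ha⟩ := ih (k+1) (kg+1) _ (sendStep id sg (g kg)) hd2 hg2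
            (by omega) (by omega) hmode'
            (by rw [sendStep_acc, sendStep_acc]; exact hgain)
          exact goal_lift v t hd1 hdk hfe hb ha

end Aux8
/-- In the restricted class-segregated buffer model (one
queue per value `v 0 < ... < v (m-1)`, all of capacity `B`), for every input
sequence `σ` and GREEDY schedule `g`: every feasible diligent schedule accepts
at most as many `v (m-1)`-packets as GREEDY (`A*_m ≤ A_m`), and there exists a
feasible diligent schedule of maximum benefit accepting exactly as many
`v (m-1)`-packets as GREEDY (`A*_m = A_m`). -/
theorem opt_accepts_as_many_top_value_packets
    (m B : ℕ) (hm : 1 ≤ m) (v : Fin m → ℝ) (hpos : ∀ i, 0 < v i)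
    (hmono : StrictMono v)
    (σ : List (BEvent m)) (g : ℕ → Option (Fin m))
    (hg : GreedyFeasible v (fun _ => B) id g σ 0 (initState m m)) :
    (∀ d : ℕ → Option (Fin m), Feasible (fun _ => B) id d σ 0 (initState m m) →
      (run (fun _ => B) id d σ 0 (initState m m)).acc ⟨m - 1, by omega⟩ ≤
        (run (fun _ => B) id g σ 0 (initState m m)).acc ⟨m - 1, by omega⟩) ∧
    ∃ d : ℕ → Option (Fin m),
      Feasible (fun _ => B) id d σ 0 (initState m m) ∧
      (∀ d' : ℕ → Option (Fin m),
        Feasible (fun _ => B) id d' σ 0 (initState m m) →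
          benefit v (run (fun _ => B) id d' σ 0 (initState m m)) ≤
            benefit v (run (fun _ => B) id d σ 0 (initState m m))) ∧
      (run (fun _ => B) id d σ 0 (initState m m)).acc ⟨m - 1, by omega⟩ =
        (run (fun _ => B) id g σ 0 (initState m m)).acc ⟨m - 1, by omega⟩ := by
  classical
  set t : Fin m := ⟨m - 1, by omega⟩ with ht
  have htop : ∀ q : Fin m, q ≤ t := by
    intro q
    have := q.2
    simp only [Fin.le_def, ht]
    omega
  have part1 : ∀ d : ℕ → Option (Fin m),
      Feasible (fun _ => B) id d σ 0 (initState m m) →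
      (run (fun _ => B) id d σ 0 (initState m m)).acc t ≤
        (run (fun _ => B) id g σ 0 (initState m m)).acc t := by
    intro d hd
    exact (coupling_top v hmono t htop d g σ 0 0 _ _ hd hg le_rfl le_rfl).2
  refine ⟨part1, ?_⟩
  -- finiteness
  set K := nsends σ with hK
  set G : (Fin K → Option (Fin m)) → ℕ → Option (Fin m) :=
    fun f j => if h : j < K then f ⟨j, h⟩ else none with hG
  have agree : ∀ dec : ℕ → Option (Fin m), ∀ j, 0 ≤ j → j < 0 + K →
      G (fun i => dec i.1) j = dec j := by
    intro dec j _ hj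
    simp only [hG]
    rw [dif_pos (by omega : j < K)]
  have run_eq : ∀ dec : ℕ → Option (Fin m),
      run (fun _ => B) id (G (fun i => dec i.1)) σ 0 (initState m m) =
        run (fun _ => B) id dec σ 0 (initState m m) :=
    fun dec => run_congr _ _ σ 0 _ _ _ (agree dec)
  have feas_of : ∀ dec : ℕ → Option (Fin m),
      Feasible (fun _ => B) id dec σ 0 (initState m m) →
      Feasible (fun _ => B) id (G (fun i => dec i.1)) σ 0 (initState m m) :=
    fun dec h => feasible_congr _ _ σ 0 _ _ _
      (fun j h1 h2 => (agree dec j h1 h2).symm) h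
  have feas_of' : ∀ f : Fin K → Option (Fin m),
      Feasible (fun _ => B) id (G f) σ 0 (initState m m) →
      Feasible (fun _ => B) id (G f) σ 0 (initState m m) := fun _ h => h
  set S : Finset (Fin K → Option (Fin m)) :=
    Finset.univ.filter
      (fun f => Feasible (fun _ => B) id (G f) σ 0 (initState m m)) with hS
  have hgS : (fun i : Fin K => g i.1) ∈ S := by
    rw [hS, Finset.mem_filter]
    exact ⟨Finset.mem_univ _, feas_of g (greedy_feasible v _ id g σ 0 _ hg)⟩
  set F : (Fin K → Option (Fin m)) → Lex (ℝ × ℕ) := fun f =>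
    toLex (benefit v (run (fun _ => B) id (G f) σ 0 (initState m m)),
      (run (fun _ => B) id (G f) σ 0 (initState m m)).acc t) with hF
  obtain ⟨f0, hf0S, hf0max⟩ := S.exists_max_image F ⟨_, hgS⟩
  have hf0feas : Feasible (fun _ => B) id (G f0) σ 0 (initState m m) := by
    rw [hS, Finset.mem_filter] at hf0S
    exact hf0S.2
  have hmax : ∀ d' : ℕ → Option (Fin m),
      Feasible (fun _ => B) id d' σ 0 (initState m m) →
      benefit v (run (fun _ => B) id d' σ 0 (initState m m)) ≤
        benefit v (run (fun _ => B) id (G f0) σ 0 (initState m m)) ∧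
      (benefit v (run (fun _ => B) id d' σ 0 (initState m m)) =
        benefit v (run (fun _ => B) id (G f0) σ 0 (initState m m)) →
        (run (fun _ => B) id d' σ 0 (initState m m)).acc t ≤
          (run (fun _ => B) id (G f0) σ 0 (initState m m)).acc t) := by
    intro d' hd'
    have hmem : (fun i : Fin K => d' i.1) ∈ S := by
      rw [hS, Finset.mem_filter]
      exact ⟨Finset.mem_univ _, feas_of d' hd'⟩
    have := hf0max _ hmem
    rw [hF] at this
    rw [Prod.Lex.le_iff] at this
    simp only at this
    rw [run_eq d'] at this
    rcases this with h | ⟨h1, h2⟩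
    · exact ⟨le_of_lt h, fun he => absurd he (ne_of_lt h)⟩
    · exact ⟨le_of_eq h1, fun _ => h2⟩
  refine ⟨G f0, hf0feas, fun d' hd' => (hmax d' hd').1, ?_⟩
  have hle := part1 (G f0) hf0feas
  by_cases hlt : (run (fun _ => B) id (G f0) σ 0 (initState m m)).acc t <
      (run (fun _ => B) id g σ 0 (initState m m)).acc t
  · exfalso
    obtain ⟨d'', hfe'', hb'', ha''⟩ := lemD v hpos hmono t htop (G f0) g σ 0 0
      (initState m m) (initState m m) hf0feas hg (by simp [initState])
      le_rfl (Or.inl rfl)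
      (by simpa [initState] using hlt)
    obtain ⟨hble, hacc⟩ := hmax d'' hfe''
    have hbeq : benefit v (run (fun _ => B) id d'' σ 0 (initState m m)) =
        benefit v (run (fun _ => B) id (G f0) σ 0 (initState m m)) :=
      le_antisymm hble hb''
    have := hacc hbeq
    omega
  · omega

end BufferModel
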